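/- arXiv:2209.08029 — 2 statements merged into one kernel-verified Lean document; each statement's English description precedes it below -/
import Mathlib

section
/- Let G be a finite simple graph with Cartier–Foata monoid M and let u ∈ V(G). Every nonempty word w ∈ M whose initial alphabet is contained in {u} admits a unique factorization w = w₁ ⋯ w_k, where k = u(w) is the number of occurrences of u in w, each w_i is a nonempty word, and the initial-alphabet multiset of each w_i is exactly {u} (i.e., IA(w_i) = {u} and u occurs exactly once in w_i's initial alphabet multiset). -/
open Classical in
noncomputable def Iav {W : Type*} [Fintype W] (G : SimpleGraph W) (T : Set W) :
    MvPolynomial W ℂ :=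
  ∑ S ∈ Finset.univ.filter
      (fun S : Finset W => (∀ x ∈ S, ∀ y ∈ S, ¬ G.Adj x y) ∧ ∀ x ∈ S, x ∉ T),
    (-1 : MvPolynomial W ℂ) ^ S.card * ∏ v ∈ S, MvPolynomial.X v

def CFRel {V : Type*} (G : SimpleGraph V) : FreeMonoid V → FreeMonoid V → Prop :=
  fun a b => ∃ u v : V, u ≠ v ∧ ¬ G.Adj u v ∧
    a = FreeMonoid.of u * FreeMonoid.of v ∧ b = FreeMonoid.of v * FreeMonoid.of u

def CFCon {V : Type*} (G : SimpleGraph V) : Con (FreeMonoid V) := conGen (CFRel G)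

def CF {V : Type*} (G : SimpleGraph V) := (CFCon G).Quotient

instance {V : Type*} (G : SimpleGraph V) : Monoid (CF G) := Con.monoid _

def CFmk {V : Type*} (G : SimpleGraph V) : FreeMonoid V →* CF G := (CFCon G).mk'

def IA {V : Type*} {G : SimpleGraph V} (w : CF G) : Set V :=
  {v | ∃ u : CF G, w = u * CFmk G (FreeMonoid.of v)}

noncomputable def CFab {V : Type*} (G : SimpleGraph V) :
    CF G →* Multiplicative (Multiset V) :=
  Con.lift _ ((FreeMonoid.lift fun v => Multiplicative.ofAdd ({v} : Multiset V)))
    (by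
      refine Con.conGen_le.mpr ?_
      rintro x y ⟨u, v, -, -, rfl, rfl⟩
      refine (Con.ker_rel _).mpr ?_
      simp [mul_comm])

noncomputable def wlen {V : Type*} {G : SimpleGraph V} (w : CF G) : ℕ :=
  Multiset.card (Multiplicative.toAdd (CFab G w))

noncomputable def occ {V : Type*} [DecidableEq V] {G : SimpleGraph V} (v : V) (w : CF G) : ℕ :=
  Multiset.count v (Multiplicative.toAdd (CFab G w))

/-- The product `Π_{y∈K} y` of the letters of a finite set `K`, multiplied in
increasing order, as an element of the Cartier–Foata monoid. -/
def prodOf {V : Type*} [LinearOrder V] (G : SimpleGraph V) (K : Finset V) : CF G :=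
  CFmk G (FreeMonoid.ofList (K.sort (· ≤ ·)))

/-- `S` is an independent set of `G`. -/
def IsIndepSet {W : Type*} (G : SimpleGraph W) (S : Set W) : Prop :=
  ∀ u ∈ S, ∀ v ∈ S, ¬ G.Adj u v

/-! A nonempty word `w` with `IA w ⊆ {u}` ends in `u`; writing `w = y * u`, peel final letters
other than `u` off `y` until only `u` can come last: `y = p * t` with `IA p ⊆ {u}` and `t` free of
`u`. Then `t * u` is the last block and `p` is factored recursively. The splitting `p * t` is
unique, which makes every block forced; this, and `IA (x * y) ⊆ IA x ∪ IA y`, rest on Levi's lemma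
for the last letter: `x * a = y * b` holds only if `a = b` and `x = y`, or `a`, `b` commute and
`x = z * b`, `y = z * a` for some `z`. -/

namespace FreeMonoid

variable {α : Type*}

theorem eq_one_or_exists_eq_mul_of (x : FreeMonoid α) : x = 1 ∨ ∃ y a, x = y * of a := by
  rcases x.toList.eq_nil_or_concat' with h | ⟨l, a, h⟩
  · exact .inl (toList.injective h)
  · exact .inr ⟨ofList l, a, toList.injective h⟩

theorem mul_of_inj {x y : FreeMonoid α} {a b : α} : x * of a = y * of b ↔ x = y ∧ a = b := by
  refine ⟨fun h => ?_, fun ⟨hxy, hab⟩ => hxy ▸ hab ▸ rfl⟩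
  obtain ⟨hxy, hab⟩ := List.append_inj' (congrArg toList h) rfl
  exact ⟨toList.injective hxy, List.singleton_injective hab⟩

end FreeMonoid

theorem List.eq_one_of_one_le_of_sum_eq_length {L : List ℕ} (h : ∀ i ∈ L, 1 ≤ i)
    (hsum : L.sum = L.length) : ∀ i ∈ L, i = 1 := by
  induction L with
  | nil => simp
  | cons a L ih =>
    simp only [List.forall_mem_cons, List.sum_cons, List.length_cons] at h hsum ⊢
    have := L.length_le_sum_of_one_le h.2
    exact ⟨by omega, ih h.2 (by omega)⟩

namespace CF

open FreeMonoid (of)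

variable {V : Type*} {G : SimpleGraph V}

abbrev letter (G : SimpleGraph V) (v : V) : CF G := CFmk G (of v)

def Swap (G : SimpleGraph V) (x y : FreeMonoid V) : Prop :=
  ∃ p q r s, CFRel G r s ∧ x = p * r * q ∧ y = p * s * q

abbrev Chain (G : SimpleGraph V) : FreeMonoid V → FreeMonoid V → Prop :=
  Relation.ReflTransGen (Swap G)

theorem Swap.symm {x y : FreeMonoid V} : Swap G x y → Swap G y x := by
  rintro ⟨p, q, _, _, ⟨a, b, hab, hadj, rfl, rfl⟩, rfl, rfl⟩
  exact ⟨p, q, _, _, ⟨b, a, hab.symm, fun h => hadj h.symm, rfl, rfl⟩, rfl, rfl⟩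

theorem Swap.mul {x y : FreeMonoid V} (l r : FreeMonoid V) (h : Swap G x y) :
    Swap G (l * x * r) (l * y * r) := by
  obtain ⟨p, q, r', s, hrs, rfl, rfl⟩ := h
  exact ⟨l * p, q * r, r', s, hrs, by simp only [mul_assoc], by simp only [mul_assoc]⟩

theorem Swap.mk_eq {x y : FreeMonoid V} (h : Swap G x y) : CFmk G x = CFmk G y := by
  obtain ⟨p, q, r, s, hrs, rfl, rfl⟩ := h
  have : CFmk G r = CFmk G s := (Con.eq _).mpr (ConGen.Rel.of _ _ hrs)
  simp only [map_mul, this]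

theorem Chain.mul {x y z w : FreeMonoid V} (h : Chain G x y) (h' : Chain G z w) :
    Chain G (x * z) (y * w) := by
  have hl := h.lift (· * z) fun _ _ hs => by simpa using hs.mul 1 z
  have hr := h'.lift (y * ·) fun _ _ hs => by simpa [mul_assoc] using hs.mul y 1
  exact hl.trans hr

theorem Chain.symm {x y : FreeMonoid V} (h : Chain G x y) : Chain G y x := by
  induction h with
  | refl => rfl
  | tail _ hs ih => exact ih.head hs.symm

def swapCon (G : SimpleGraph V) : Con (FreeMonoid V) where
  r := Chain G
  iseqv := ⟨fun _ => .refl, Chain.symm, Relation.ReflTransGen.trans⟩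
  mul' := Chain.mul

theorem chain_of_mk_eq {x y : FreeMonoid V} (h : CFmk G x = CFmk G y) : Chain G x y := by
  have hle : CFCon G ≤ swapCon G := Con.conGen_le.mpr fun r s hrs =>
    .single ⟨1, 1, r, s, hrs, by simp, by simp⟩
  exact hle ((Con.eq _).mp h)

theorem mk_surjective : Function.Surjective (CFmk G) := Con.mk'_surjective

theorem letter_mul_letter_comm {a b : V} (hab : a ≠ b) (hadj : ¬ G.Adj a b) :
    letter G a * letter G b = letter G b * letter G a := by
  simpa using Swap.mk_eq (G := G) ⟨1, 1, _, _, ⟨a, b, hab, hadj, rfl, rfl⟩, rfl, rfl⟩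

theorem induction_on_mul_letter {motive : CF G → Prop} (w : CF G) (one : motive 1)
    (mul_letter : ∀ x a, motive x → motive (x * letter G a)) : motive w := by
  obtain ⟨x, rfl⟩ := mk_surjective w
  refine List.reverseRecOn (motive := fun l => motive (CFmk G (FreeMonoid.ofList l)))
    x.toList one fun l a h => ?_
  simpa [FreeMonoid.ofList_append] using mul_letter _ a h

theorem CFab_letter (v : V) : CFab G (letter G v) = Multiplicative.ofAdd {v} := rfl

theorem wlen_mul (x y : CF G) : wlen (x * y) = wlen x + wlen y := by
  simp [wlen]

theorem wlen_one : wlen (1 : CF G) = 0 := by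
  simp [wlen]

theorem wlen_letter (v : V) : wlen (letter G v) = 1 := by
  simp [wlen, CFab_letter]

-- The two ways in which `x * a = y * b` can hold (Levi's lemma for a last letter).
def LeviSplit (x : CF G) (a : V) (y : CF G) (b : V) : Prop :=
  (a = b ∧ x = y) ∨ (a ≠ b ∧ ¬ G.Adj a b ∧ ∃ z, x = z * letter G b ∧ y = z * letter G a)

theorem Swap.exists_leviSplit {x m : FreeMonoid V} {b : V} (h : Swap G x (m * of b)) :
    ∃ k c, x = k * of c ∧ LeviSplit (CFmk G k) c (CFmk G m) b := by
  obtain ⟨p, q, _, _, ⟨a, a', hne, hadj, rfl, rfl⟩, rfl, hy⟩ := h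
  rcases q.eq_one_or_exists_eq_mul_of with rfl | ⟨q, d, rfl⟩
  · have hy' : p * of a' * of a = m * of b := by rw [hy, mul_one, mul_assoc]
    obtain ⟨rfl, rfl⟩ := FreeMonoid.mul_of_inj.mp hy'
    exact ⟨p * of a, a', by simp [mul_assoc], .inr ⟨hne.symm, fun h => hadj h.symm, CFmk G p,
      map_mul _ _ _, map_mul _ _ _⟩⟩
  · have hy' : p * (of a' * of a) * q * of d = m * of b := by rw [hy, mul_assoc]
    obtain ⟨rfl, rfl⟩ := FreeMonoid.mul_of_inj.mp hy'
    refine ⟨p * (of a * of a') * q, d, by simp only [mul_assoc], .inl ⟨rfl, ?_⟩⟩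
    exact Swap.mk_eq ⟨p, q, _, _, ⟨a, a', hne, hadj, rfl, rfl⟩, by simp only [mul_assoc], rfl⟩

theorem LeviSplit.trans {x y z : CF G} {a b c : V}
    (ih : ∀ (x' y' : CF G) (a' b' : V), wlen x' < wlen x →
      x' * letter G a' = y' * letter G b' → LeviSplit x' a' y' b')
    (h₁ : LeviSplit x a y b) (h₂ : LeviSplit y b z c) : LeviSplit x a z c := by
  rcases h₁ with ⟨rfl, rfl⟩ | ⟨hab, hadj₁, x₁, rfl, rfl⟩
  · exact h₂
  rcases h₂ with ⟨rfl, rfl⟩ | ⟨hbc, hadj₂, y₁, hy, rfl⟩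
  · exact .inr ⟨hab, hadj₁, x₁, rfl, rfl⟩
  have hlt : wlen x₁ < wlen (x₁ * letter G b) := by simp [wlen_mul, wlen_letter]
  rcases ih x₁ y₁ a c hlt hy with ⟨rfl, rfl⟩ | ⟨hac, hadj₃, w, rfl, rfl⟩
  · exact .inl ⟨rfl, rfl⟩
  refine .inr ⟨hac, hadj₃, w * letter G b, ?_, ?_⟩
  · rw [mul_assoc, letter_mul_letter_comm hbc.symm fun h => hadj₂ h.symm, mul_assoc]
  · rw [mul_assoc, letter_mul_letter_comm hab hadj₁, mul_assoc]

theorem leviSplit_of_mul_letter_eq {x y : CF G} {a b : V}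
    (h : x * letter G a = y * letter G b) : LeviSplit x a y b := by
  induction hn : wlen x using Nat.strong_induction_on generalizing x y a b with
  | _ n ih =>
  obtain ⟨l, rfl⟩ := mk_surjective x
  obtain ⟨m, rfl⟩ := mk_surjective y
  have hchain : Chain G (l * of a) (m * of b) := chain_of_mk_eq (by simpa using h)
  -- Follow the rewriting chain from `l * a`, splitting each word along it at its last letter.
  suffices ∀ r, Chain G (l * of a) r → ∀ k c, r = k * of c → LeviSplit (CFmk G l) a (CFmk G k) c
    from this _ hchain m b rfl
  intro r hr
  induction hr with
  | refl =>
    intro k c hk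
    obtain ⟨rfl, rfl⟩ := FreeMonoid.mul_of_inj.mp hk
    exact .inl ⟨rfl, rfl⟩
  | tail _ hs ih' =>
    rintro m b rfl
    obtain ⟨k, c, rfl, hkm⟩ := hs.exists_leviSplit
    exact (ih' k c rfl).trans (fun _ _ _ _ hlt h' => ih _ (hn ▸ hlt) h' rfl) hkm

theorem mul_letter_right_cancel {x y : CF G} {a : V} (h : x * letter G a = y * letter G a) :
    x = y := by
  rcases leviSplit_of_mul_letter_eq h with ⟨-, h⟩ | ⟨h, -⟩
  exacts [h, absurd rfl h]

theorem mem_IA_mul_left {v : V} {y : CF G} (x : CF G) (h : v ∈ IA y) : v ∈ IA (x * y) := by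
  obtain ⟨s, rfl⟩ := h
  exact ⟨x * s, (mul_assoc _ _ _).symm⟩

theorem IA_eq_empty_iff {w : CF G} : IA w = ∅ ↔ w = 1 := by
  refine ⟨fun h => ?_, ?_⟩
  · induction w using induction_on_mul_letter with
    | one => rfl
    | mul_letter x a _ => exact absurd (h ▸ ⟨x, rfl⟩ : a ∈ (∅ : Set V)) id
  · rintro rfl
    refine Set.eq_empty_of_forall_notMem fun v ⟨y, hy⟩ => ?_
    simpa [wlen_one, wlen_mul, wlen_letter] using congrArg wlen hy

theorem mem_IA_mul {x y : CF G} {v : V} (h : v ∈ IA (x * y)) : v ∈ IA x ∨ v ∈ IA y := by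
  induction y using induction_on_mul_letter with
  | one => exact .inl (by simpa using h)
  | mul_letter y c ih =>
    obtain ⟨s, hs⟩ := h
    rw [← mul_assoc] at hs
    rcases leviSplit_of_mul_letter_eq hs with ⟨rfl, -⟩ | ⟨hcv, hadj, z, hz, -⟩
    · exact .inr ⟨y, rfl⟩
    rcases ih ⟨z, hz⟩ with hx | ⟨t, rfl⟩
    · exact .inl hx
    · refine .inr ⟨t * letter G c, ?_⟩
      rw [mul_assoc, mul_assoc, letter_mul_letter_comm hcv.symm fun h => hadj h.symm]

theorem IA_prod_subset {s : Set V} {l : List (CF G)} (h : ∀ z ∈ l, IA z ⊆ s) :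
    IA l.prod ⊆ s := by
  induction l with
  | nil => simp [IA_eq_empty_iff.mpr rfl]
  | cons z l ih =>
    simp only [List.forall_mem_cons] at h
    intro v hv
    exact (mem_IA_mul hv).elim (fun hz => h.1 hz) fun hl => ih h.2 hl

variable [DecidableEq V]

theorem occ_mul (u : V) (x y : CF G) : occ u (x * y) = occ u x + occ u y := by
  simp [occ]

theorem occ_one (u : V) : occ u (1 : CF G) = 0 := by
  simp [occ]

theorem occ_letter_self (u : V) : occ u (letter G u) = 1 := by
  simp [occ, CFab_letter]

theorem occ_letter_of_ne {u v : V} (h : v ≠ u) : occ u (letter G v) = 0 := by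
  simp [occ, CFab_letter, h.symm]

theorem occ_prod (u : V) (l : List (CF G)) : occ u l.prod = (l.map (occ u)).sum := by
  induction l <;> simp [occ_one, occ_mul, *]

theorem one_le_occ_of_mem_IA {v : V} {w : CF G} (h : v ∈ IA w) : 1 ≤ occ v w := by
  obtain ⟨y, rfl⟩ := h
  simp [occ_mul, occ_letter_self]

theorem exists_eq_mul_IA_subset_occ_eq_zero (u : V) (y : CF G) :
    ∃ p t, y = p * t ∧ IA p ⊆ {u} ∧ occ u t = 0 := by
  induction hn : wlen y using Nat.strong_induction_on generalizing y with
  | _ n ih =>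
  by_cases hy : IA y ⊆ {u}
  · exact ⟨y, 1, (mul_one y).symm, hy, occ_one u⟩
  obtain ⟨v, ⟨s, rfl⟩, hvu⟩ := Set.not_subset.mp hy
  obtain ⟨p, t, rfl, hp, ht⟩ := ih (wlen s) (by simp [← hn, wlen_mul, wlen_letter]) s rfl
  exact ⟨p, t * letter G v, by rw [mul_assoc], hp, by rw [occ_mul, ht, occ_letter_of_ne hvu]⟩

theorem eq_and_eq_of_mul_eq_mul_of_IA_subset {u : V} {p p' t t' : CF G}
    (hp : IA p ⊆ {u}) (hp' : IA p' ⊆ {u}) (ht : occ u t = 0) (ht' : occ u t' = 0)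
    (h : p * t = p' * t') : p = p' ∧ t = t' := by
  induction t using induction_on_mul_letter generalizing t' with
  | one =>
    -- A final letter of `t'` would be one of `p`, hence `u`, which does not occur in `t'`.
    rcases eq_or_ne t' 1 with rfl | ht'1
    · simpa using h
    obtain ⟨v, hv⟩ := Set.nonempty_iff_ne_empty.mpr (IA_eq_empty_iff.not.mpr ht'1)
    have hvp := mem_IA_mul_left p' hv
    rw [← h, mul_one] at hvp
    obtain rfl : v = u := hp hvp
    exact absurd ht' (Nat.one_le_iff_ne_zero.mp (one_le_occ_of_mem_IA hv))
  | mul_letter t v ih =>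
    have hvu : v ≠ u := by
      rintro rfl
      simp [occ_mul, occ_letter_self] at ht
    rcases mem_IA_mul (h ▸ ⟨p * t, (mul_assoc _ _ _).symm⟩ : v ∈ IA (p' * t')) with hv | ⟨s', rfl⟩
    · exact absurd (hp' hv) hvu
    rw [← mul_assoc, ← mul_assoc] at h
    simp only [occ_mul, occ_letter_of_ne hvu, add_zero] at ht ht'
    obtain ⟨rfl, rfl⟩ := ih ht ht' (mul_letter_right_cancel h)
    exact ⟨rfl, rfl⟩

def IsBlock (u : V) (z : CF G) : Prop :=
  IA z = {u} ∧ occ u z = 1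

theorem IsBlock.ne_one {u : V} {z : CF G} (h : IsBlock u z) : z ≠ 1 := by
  rintro rfl
  exact Set.singleton_ne_empty u (h.1.symm.trans (IA_eq_empty_iff.mpr rfl))

theorem IsBlock.exists_eq_mul_letter {u : V} {z : CF G} (h : IsBlock u z) :
    ∃ s, z = s * letter G u ∧ occ u s = 0 := by
  obtain ⟨s, rfl⟩ : u ∈ IA z := h.1 ▸ rfl
  have := h.2
  rw [occ_mul, occ_letter_self] at this
  exact ⟨s, rfl, by omega⟩

theorem IsBlock.not_exists_eq_mul_letter_mul_letter {u : V} {z : CF G} (h : IsBlock u z) :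
    ¬ ∃ y, z = y * letter G u * letter G u := by
  rintro ⟨y, rfl⟩
  have := h.2
  simp [occ_mul, occ_letter_self] at this

theorem occ_prod_of_isBlock {u : V} {l : List (CF G)} (h : ∀ z ∈ l, IsBlock u z) :
    occ u l.prod = l.length := by
  rw [occ_prod, List.map_congr_left (fun z hz => (h z hz).2)]
  simp

theorem exists_isBlock_factorization {u : V} {w : CF G} (hw : IA w ⊆ {u}) :
    ∃ ws : List (CF G), ws.prod = w ∧ ∀ z ∈ ws, IsBlock u z := by
  induction hn : occ u w using Nat.strong_induction_on generalizing w with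
  | _ n ih =>
  rcases eq_or_ne w 1 with rfl | hw1
  · exact ⟨[], rfl, by simp⟩
  obtain ⟨v, hv⟩ := Set.nonempty_iff_ne_empty.mpr (IA_eq_empty_iff.not.mpr hw1)
  obtain rfl : v = u := hw hv
  obtain ⟨y, rfl⟩ := hv
  obtain ⟨p, t, rfl, hp, ht⟩ := exists_eq_mul_IA_subset_occ_eq_zero v y
  have hblock : IsBlock v (t * letter G v) := by
    refine ⟨subset_antisymm (fun x hx => hw ?_) fun x hx => hx ▸ ⟨t, rfl⟩, ?_⟩
    · simpa [mul_assoc] using mem_IA_mul_left p hx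
    · rw [occ_mul, ht, occ_letter_self]
  obtain ⟨ws, rfl, hws⟩ := ih (occ v p) (by simp [← hn, occ_mul, occ_letter_self]) hp rfl
  refine ⟨ws ++ [t * letter G v], by simp [mul_assoc], ?_⟩
  intro z hz
  rcases List.mem_append.mp hz with hz | hz
  exacts [hws z hz, List.mem_singleton.mp hz ▸ hblock]

theorem isBlock_factorization_unique {u : V} {ps qs : List (CF G)}
    (hp : ∀ z ∈ ps, IsBlock u z) (hq : ∀ z ∈ qs, IsBlock u z) (h : ps.prod = qs.prod) :
    ps = qs := by
  have hlen : ps.length = qs.length := by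
    rw [← occ_prod_of_isBlock hp, ← occ_prod_of_isBlock hq, h]
  induction ps using List.reverseRecOn generalizing qs with
  | nil => exact (List.length_eq_zero_iff.mp hlen.symm).symm
  | append_singleton ps z ih =>
    obtain ⟨qs, z', rfl⟩ := qs.eq_nil_or_concat'.resolve_left fun h => by simp [h] at hlen
    simp only [List.forall_mem_append, List.forall_mem_singleton] at hp hq
    obtain ⟨s, rfl, hs⟩ := hp.2.exists_eq_mul_letter
    obtain ⟨s', rfl, hs'⟩ := hq.2.exists_eq_mul_letter
    simp only [List.prod_append, List.prod_singleton, ← mul_assoc] at h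
    obtain ⟨hprod, rfl⟩ := eq_and_eq_of_mul_eq_mul_of_IA_subset
      (IA_prod_subset fun z hz => (hp.1 z hz).1.subset)
      (IA_prod_subset fun z hz => (hq.1 z hz).1.subset) hs hs' (mul_letter_right_cancel h)
    rw [ih hp.1 hq.1 hprod (by simpa using hlen)]

theorem isBlock_of_length_eq_occ_prod {u : V} {l : List (CF G)} (hIA : ∀ z ∈ l, IA z = {u})
    (hlen : l.length = occ u l.prod) : ∀ z ∈ l, IsBlock u z := by
  have hocc : ∀ i ∈ l.map (occ u), i = 1 := by
    refine List.eq_one_of_one_le_of_sum_eq_length ?_ (by rw [List.length_map, ← occ_prod, hlen])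
    simp only [List.mem_map, forall_exists_index, and_imp, forall_apply_eq_imp_iff₂]
    exact fun z hz => one_le_occ_of_mem_IA ((hIA z hz).symm ▸ rfl)
  exact fun z hz => ⟨hIA z hz, hocc _ (List.mem_map_of_mem hz)⟩

end CF

theorem stmt_8_general {V : Type*} [DecidableEq V] (G : SimpleGraph V) (u : V)
    (w : CF G) (hIA : IA w ⊆ {u}) :
    ∃! ws : List (CF G),
      ws.length = occ u w ∧ ws.prod = w ∧
      ∀ wi ∈ ws, wi ≠ 1 ∧ IA wi = {u} ∧
        ¬ ∃ y : CF G, wi = y * CFmk G (FreeMonoid.of u) * CFmk G (FreeMonoid.of u) := by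
  obtain ⟨ws, rfl, hws⟩ := CF.exists_isBlock_factorization hIA
  refine ⟨ws, ⟨(CF.occ_prod_of_isBlock hws).symm, rfl, fun z hz => ?_⟩, ?_⟩
  · exact ⟨(hws z hz).ne_one, (hws z hz).1, (hws z hz).not_exists_eq_mul_letter_mul_letter⟩
  rintro qs ⟨hlen, hprod, hqs⟩
  exact CF.isBlock_factorization_unique
    (CF.isBlock_of_length_eq_occ_prod (fun z hz => (hqs z hz).2.1) (by rwa [hprod])) hws hprod

/-- The ia-decomposition: every nonempty word `w` with `IA(w) ⊆ {u}` factors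
uniquely as `w = w₁ ⋯ w_k` with `k = u(w)`, where each `w_i` is nonempty with
initial alphabet multiset exactly `{u}` (i.e. `IA(w_i) = {u}` and `u` has
multiplicity one in the initial alphabet multiset of `w_i`). -/
theorem stmt_8 {V : Type*} [Fintype V] [DecidableEq V] (G : SimpleGraph V) (u : V)
    (w : CF G) (hw : w ≠ 1) (hIA : IA w ⊆ {u}) :
    ∃! ws : List (CF G),
      ws.length = occ u w ∧ ws.prod = w ∧
      ∀ wi ∈ ws, wi ≠ 1 ∧ IA wi = {u} ∧
        ¬ ∃ y : CF G, wi = y * CFmk G (FreeMonoid.of u) * CFmk G (FreeMonoid.of u) :=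
  stmt_8_general G u w hIA
end

section
/- Let G be a finite simple connected graph, u, v distinct vertices, and p = v₁v₂⋯v_k a shortest path from u = v₁ to v = v_k. Then the map sending a pair (wu, w'v) ∈ 𝒫_u(G) × 𝒫_v(G) to the pair ((w·v₂·v₄⋯)/Π_{y∈H₁}y, (w'·v₁·v₃⋯)/Π_{y∈H₂}y), where H₁ = IA(w·v₂·v₄⋯) and H₂ = IA(w'·v₁·v₃⋯), is a bijection onto the disjoint union over all connected bipartite subgraphs H = H₁ ⊔ H₂ of G containing p with H₁\{v₂,v₄,…} ⊆ N_G[u] and H₂\{v₁,v₃,…} ⊆ N_G[v], of the sets 𝒫^∅_{Z₁(H)}(G) × 𝒫^∅_{Z₂(H)}(G), where Z₁(H) = N_G[H₁\{v₂,v₄,…}] ∪ (N_G[H₁] ∩ N_G[u]) and Z₂(H) = N_G[H₂\{v₁,v₃,…}] ∪ (N_G[H₂] ∩ N_G[v]). -/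
open Classical in
/-- The closed neighborhood `N_G[K]` of a finite set `K`, as a finite set. -/
noncomputable def NclF {V : Type*} [Fintype V] [DecidableEq V] (G : SimpleGraph V)
    (K : Finset V) : Finset V :=
  K ∪ Finset.univ.filter (fun z => ∃ w ∈ K, G.Adj w z)

/-- The bipartite graph induced by `G` between the parts `H1` and `H2`. -/
def bipGraph {V : Type*} [DecidableEq V] (G : SimpleGraph V) (H1 H2 : Finset V) :
    SimpleGraph V where
  Adj a b := G.Adj a b ∧ ((a ∈ H1 ∧ b ∈ H2) ∨ (a ∈ H2 ∧ b ∈ H1))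
  symm := by
    constructor
    rintro a b ⟨h, h2 | h2⟩
    · exact ⟨h.symm, Or.inr ⟨h2.2, h2.1⟩⟩
    · exact ⟨h.symm, Or.inl ⟨h2.2, h2.1⟩⟩
  loopless := by constructor; rintro a ⟨h, -⟩; exact G.loopless.irrefl a h

/-- `(H1, H2)` is a connected bipartite subgraph of `G` with parts `H1`, `H2`. -/
def IsConnBipartite {V : Type*} [Fintype V] [DecidableEq V] (G : SimpleGraph V)
    (H1 H2 : Finset V) : Prop :=
  Disjoint H1 H2 ∧ IsIndepSet G ↑H1 ∧ IsIndepSet G ↑H2 ∧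
    ∀ a ∈ H1 ∪ H2, ∀ b ∈ H1 ∪ H2, (bipGraph G H1 H2).Reachable a b

/-- The vertices `v₂, v₄, …` of a path (paper indexing: `v₁ = u` is the first
vertex of the walk). -/
def evenVerts {V : Type*} {G : SimpleGraph V} {u v : V} (p : G.Walk u v) : List V :=
  (p.support.zipIdx.filter (fun x => x.2 % 2 = 1)).map Prod.fst

/-- The vertices `v₁, v₃, …` of a path. -/
def oddVerts {V : Type*} {G : SimpleGraph V} {u v : V} (p : G.Walk u v) : List V :=
  (p.support.zipIdx.filter (fun x => x.2 % 2 = 0)).map Prod.fst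

open Classical in
/-- Connected bipartite subgraphs `H = H₁ ⊔ H₂` of `G` containing the path `p`
(with `v₂, v₄, … ∈ H₁` and `v₁, v₃, … ∈ H₂`) such that `H₁ ∖ {v₂,v₄,…} ⊆ N_G[u]`
and `H₂ ∖ {v₁,v₃,…} ⊆ N_G[v]`. -/
def BipPathIdx {V : Type*} [Fintype V] [LinearOrder V] (G : SimpleGraph V)
    {u v : V} (p : G.Walk u v) : Set (Finset V × Finset V) :=
  {H | (∀ x ∈ evenVerts p, x ∈ H.1) ∧ (∀ x ∈ oddVerts p, x ∈ H.2) ∧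
    IsConnBipartite G H.1 H.2 ∧
    H.1 \ (evenVerts p).toFinset ⊆ NclF G {u} ∧
    H.2 \ (oddVerts p).toFinset ⊆ NclF G {v}}

open Classical in
/-- `Z₁(H) = N_G[H₁ ∖ {v₂,v₄,…}] ∪ (N_G[H₁] ∩ N_G[u])`. -/
noncomputable def Zone {V : Type*} [Fintype V] [LinearOrder V] (G : SimpleGraph V)
    {u v : V} (p : G.Walk u v) (H : Finset V × Finset V) : Finset V :=
  NclF G (H.1 \ (evenVerts p).toFinset) ∪ (NclF G H.1 ∩ NclF G {u})

open Classical in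
/-- `Z₂(H) = N_G[H₂ ∖ {v₁,v₃,…}] ∪ (N_G[H₂] ∩ N_G[v])`. -/
noncomputable def Ztwo {V : Type*} [Fintype V] [LinearOrder V] (G : SimpleGraph V)
    {u v : V} (p : G.Walk u v) (H : Finset V × Finset V) : Finset V :=
  NclF G (H.2 \ (oddVerts p).toFinset) ∪ (NclF G H.2 ∩ NclF G {v})

/-!
Every nonempty word with initial alphabet in `{c}` is `w c`. The even- and odd-indexed vertices
of a shortest path are independent sets `T`, so each multiplies out as a commuting block and
`IA (w Π T) = T ∪ (IA w ∖ N[T])`, while `IA (w c) ⊆ {c}` forces `IA w ⊆ N[c]`. Hence each end of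
the path contributes a bijection `w ↦ (K, a)` with `K = IA (w Π T)` and `w Π T = a Π K`, whose
image is exactly the pairs with `T ⊆ K` independent, `K ∖ T ⊆ N[c]` and `IA a ⊆ Z(K)`; the
inverse divides `a Π K` on the right by `Π T`. The two one-sided conditions already make
`(H₁, H₂)` a connected bipartite subgraph: every vertex of `H₁ ∪ H₂` lies on the path or is
adjacent to `u` or `v`.

The word calculus rests on the projections of a word onto pairs of non-commuting letters, which
determine its class in the Cartier–Foata monoid; this gives right cancellation and the
description of `IA (c x)`: besides `x`, the letters of `IA c` that commute with `x`.
-/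

namespace CF

variable {V : Type*} {G : SimpleGraph V}

variable (G) in
def ofList (l : List V) : CF G := CFmk G (FreeMonoid.ofList l)

@[simp]
lemma ofList_nil : ofList G ([] : List V) = 1 := rfl

lemma ofList_append (l l' : List V) : ofList G (l ++ l') = ofList G l * ofList G l' := by
  simp [ofList, FreeMonoid.ofList_append]

lemma ofList_cons (x : V) (l : List V) : ofList G (x :: l) = ofList G [x] * ofList G l :=
  ofList_append [x] l

lemma exists_ofList_eq (z : CF G) : ∃ l : List V, ofList G l = z := by
  obtain ⟨m, rfl⟩ := Con.mk'_surjective (c := CFCon G) z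
  exact ⟨m.toList, rfl⟩

lemma ofList_pair_comm {x y : V} (hxy : x ≠ y) (hadj : ¬ G.Adj x y) :
    ofList G [x, y] = ofList G [y, x] :=
  (Con.eq _).mpr (ConGen.Rel.of _ _ ⟨x, y, hxy, hadj, rfl, rfl⟩)

lemma commute_ofList_singleton {x y : V} (h : x = y ∨ ¬ G.Adj x y) :
    Commute (ofList G [x]) (ofList G [y]) := by
  by_cases hxy : x = y
  · subst hxy; exact Commute.refl _
  · simpa [Commute, SemiconjBy, ← ofList_append] using ofList_pair_comm hxy (h.resolve_left hxy)

lemma ofList_eq_prod (l : List V) : ofList G l = (l.map (ofList G [·])).prod := by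
  induction l with
  | nil => rfl
  | cons x l ih => rw [ofList_cons, ih]; rfl

lemma ofList_perm {l l' : List V} (hp : l.Perm l') (hl : ∀ x ∈ l, ∀ y ∈ l, ¬ G.Adj x y) :
    ofList G l = ofList G l' := by
  rw [ofList_eq_prod, ofList_eq_prod]
  refine (hp.map _).prod_eq' ?_
  refine List.Pairwise.map _ (fun x y h => commute_ofList_singleton h) ?_
  exact List.pairwise_of_forall_mem_list (fun x hx y hy => Or.inr (hl x hx y hy))

lemma ofList_cons_eq_append {x : V} {l : List V} (hl : ∀ y ∈ l, y ≠ x ∧ ¬ G.Adj x y) :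
    ofList G (x :: l) = ofList G (l ++ [x]) := by
  induction l with
  | nil => rfl
  | cons y l ih =>
    obtain ⟨hyx, hxy⟩ := hl y (by simp)
    calc ofList G (x :: y :: l) = ofList G [x, y] * ofList G l := ofList_append [x, y] l
      _ = ofList G [y] * ofList G (x :: l) := by
        rw [ofList_pair_comm (Ne.symm hyx) hxy, ← ofList_cons, ← ofList_append]; rfl
      _ = ofList G (y :: l ++ [x]) := by
        rw [ih (fun z hz => hl z (by simp [hz])), ← ofList_append]; rfl

section Projection

variable [DecidableEq V]

/-- For `a`, `b` not commuting, the subword on `{a, b}` is an invariant of the Cartier–Foata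
class, and these invariants determine the class. -/
def proj (a b : V) (l : List V) : List V := l.filter (fun x => x = a ∨ x = b)

lemma proj_append (a b : V) (l l' : List V) : proj a b (l ++ l') = proj a b l ++ proj a b l' :=
  List.filter_append ..

lemma proj_pair_comm {x y a b : V} (hxy : x ≠ y) (hadj : ¬ G.Adj x y) (hab : a = b ∨ G.Adj a b) :
    proj a b [x, y] = proj a b [y, x] := by
  by_cases hx : x = a ∨ x = b <;> by_cases hy : y = a ∨ y = b <;> simp [proj, hx, hy]
  rcases hab with rfl | hab
  · grind
  · rcases hx with rfl | rfl <;> rcases hy with rfl | rfl <;> grind [G.adj_symm]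

variable (G) in
def projCon : Con (FreeMonoid V) where
  r m m' := ∀ a b, a = b ∨ G.Adj a b → proj a b m.toList = proj a b m'.toList
  iseqv := ⟨fun _ _ _ _ => rfl, fun h a b hab => (h a b hab).symm,
    fun h h' a b hab => (h a b hab).trans (h' a b hab)⟩
  mul' h h' a b hab := by
    simp only [FreeMonoid.toList_mul, proj_append, h a b hab, h' a b hab]

lemma proj_eq_of_ofList_eq {l l' : List V} (h : ofList G l = ofList G l') {a b : V}
    (hab : a = b ∨ G.Adj a b) : proj a b l = proj a b l' := by
  have hle : CFCon G ≤ projCon G := by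
    refine Con.conGen_le.mpr ?_
    rintro _ _ ⟨x, y, hxy, hadj, rfl, rfl⟩ a b hab
    exact proj_pair_comm hxy hadj hab
  exact hle ((Con.eq _).mp h) a b hab

lemma mem_of_proj_eq {l l' : List V} (h : ∀ a b, a = b ∨ G.Adj a b → proj a b l = proj a b l')
    {x : V} (hx : x ∈ l) : x ∈ l' := by
  have : x ∈ proj x x l' := by rw [← h x x (Or.inl rfl)]; simp [proj, hx]
  exact (List.mem_filter.mp this).1

lemma exists_split_of_proj_eq {m l : List V} {x : V}
    (h : ∀ a b, a = b ∨ G.Adj a b → proj a b (m ++ [x]) = proj a b l) :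
    ∃ l₁ l₂, l = l₁ ++ x :: l₂ ∧ ∀ y ∈ l₂, y ≠ x ∧ ¬ G.Adj x y := by
  have hx : x ∈ l.reverse := List.mem_reverse.mpr (mem_of_proj_eq h (by simp))
  obtain ⟨s, t, hxs, hrev, -⟩ := List.exists_erase_eq hx
  refine ⟨t.reverse, s.reverse, by simpa using congrArg List.reverse hrev, fun y hy => ?_⟩
  have hyx : y ≠ x := by rintro rfl; exact hxs (List.mem_reverse.mp hy)
  refine ⟨hyx, fun hadj => hxs ?_⟩
  -- read right to left, the projections on `{x, y}` start with `x`, resp. with a letter of `s`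
  have hrev' := congrArg List.reverse (h x y (Or.inr hadj))
  have hne : s.filter (fun z => z = x ∨ z = y) ≠ [] :=
    List.ne_nil_of_mem (List.mem_filter.mpr ⟨List.mem_reverse.mp hy, by simp⟩)
  obtain ⟨a, r, hs⟩ := List.exists_cons_of_ne_nil hne
  have hpx : decide (x = x ∨ x = y) = true := by simp
  rw [proj, proj, ← List.filter_reverse, ← List.filter_reverse, List.reverse_concat, hrev,
    List.filter_append, List.filter_cons_of_pos (p := fun z => decide (z = x ∨ z = y)) hpx,
    List.filter_cons_of_pos (p := fun z => decide (z = x ∨ z = y)) hpx, hs,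
    List.cons_append, List.cons.injEq] at hrev'
  have ha : a ∈ s.filter (fun z => z = x ∨ z = y) := hs ▸ List.mem_cons_self
  exact hrev'.1 ▸ (List.mem_filter.mp ha).1

lemma ofList_eq_of_proj_eq {l l' : List V}
    (h : ∀ a b, a = b ∨ G.Adj a b → proj a b l = proj a b l') : ofList G l = ofList G l' := by
  induction l using List.reverseRecOn generalizing l' with
  | nil =>
    have : l' = [] := List.eq_nil_iff_forall_not_mem.mpr
      fun y hy => by simpa using mem_of_proj_eq (fun a b hab => (h a b hab).symm) hy
    rw [this]
  | append_singleton m x ih =>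
    obtain ⟨l₁, l₂, rfl, hl₂⟩ := exists_split_of_proj_eq h
    have hmove : ofList G (l₁ ++ x :: l₂) = ofList G (l₁ ++ l₂ ++ [x]) := by
      rw [ofList_append, ofList_cons_eq_append hl₂, List.append_assoc, ofList_append l₁]
    have hm : ∀ a b, a = b ∨ G.Adj a b → proj a b m = proj a b (l₁ ++ l₂) := fun a b hab => by
      have := (h a b hab).trans (proj_eq_of_ofList_eq hmove hab)
      rw [proj_append, proj_append _ _ (l₁ ++ l₂)] at this
      exact List.append_cancel_right this
    rw [hmove, ofList_append, ih hm, ← ofList_append]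

end Projection

instance : IsRightCancelMul (CF G) where
  mul_right_cancel c s s' h := by
    classical
    obtain ⟨l, rfl⟩ := exists_ofList_eq s
    obtain ⟨l', rfl⟩ := exists_ofList_eq s'
    obtain ⟨m, rfl⟩ := exists_ofList_eq c
    change ofList G l * ofList G m = ofList G l' * ofList G m at h
    rw [← ofList_append, ← ofList_append] at h
    refine ofList_eq_of_proj_eq fun a b hab => List.append_cancel_right (bs := proj a b m) ?_
    simpa only [proj_append] using proj_eq_of_ofList_eq h hab

lemma mem_IA_iff {z : CF G} {x : V} : x ∈ IA z ↔ ∃ c, z = c * ofList G [x] := Iff.rfl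

lemma mem_IA_ofList_iff {l : List V} {x : V} :
    x ∈ IA (ofList G l) ↔ ∃ l₁ l₂, l = l₁ ++ x :: l₂ ∧ ∀ y ∈ l₂, y ≠ x ∧ ¬ G.Adj x y := by
  classical
  constructor
  · intro hx
    obtain ⟨c, hc⟩ := mem_IA_iff.mp hx
    obtain ⟨m, rfl⟩ := exists_ofList_eq c
    rw [← ofList_append] at hc
    exact exists_split_of_proj_eq fun a b hab => (proj_eq_of_ofList_eq hc hab).symm
  · rintro ⟨l₁, l₂, rfl, hl₂⟩
    refine mem_IA_iff.mpr ⟨ofList G (l₁ ++ l₂), ?_⟩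
    rw [ofList_append, ofList_cons_eq_append hl₂, ← ofList_append, ← ofList_append,
      List.append_assoc]

lemma mem_IA_mul_singleton_iff {c : CF G} {x y : V} :
    y ∈ IA (c * ofList G [x]) ↔ y = x ∨ y ≠ x ∧ ¬ G.Adj x y ∧ y ∈ IA c := by
  constructor
  · intro hy
    refine or_iff_not_imp_left.mpr fun hyx => ⟨hyx, ?_⟩
    obtain ⟨m, rfl⟩ := exists_ofList_eq c
    rw [← ofList_append, mem_IA_ofList_iff] at hy
    obtain ⟨l₁, l₂, hsplit, hl₂⟩ := hy
    rcases List.eq_nil_or_concat' l₂ with rfl | ⟨l₂', b, rfl⟩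
    · exact absurd (List.append_inj' hsplit rfl).2 (by simpa using Ne.symm hyx)
    have hsplit' : m ++ [x] = (l₁ ++ y :: l₂') ++ [b] := by rw [hsplit]; simp
    obtain ⟨hm, hxb⟩ := List.append_inj' hsplit' rfl
    obtain rfl : x = b := List.singleton_inj.mp hxb
    exact ⟨fun h => (hl₂ x (by simp)).2 h.symm, mem_IA_ofList_iff.mpr
      ⟨l₁, l₂', hm, fun z hz => hl₂ z (by simp [hz])⟩⟩
  · rintro (rfl | ⟨hyx, hadj, hy⟩)
    · exact mem_IA_iff.mpr ⟨c, rfl⟩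
    · obtain ⟨d, rfl⟩ := mem_IA_iff.mp hy
      refine mem_IA_iff.mpr ⟨d * ofList G [x], ?_⟩
      rw [mul_assoc, mul_assoc, ← ofList_append, ← ofList_append]
      exact congrArg (d * ·) (ofList_pair_comm hyx fun h => hadj h.symm)

lemma isIndepSet_IA (z : CF G) : IsIndepSet G (IA z) := by
  intro x hx y hy
  obtain ⟨c, rfl⟩ := mem_IA_iff.mp hx
  rcases mem_IA_mul_singleton_iff.mp hy with rfl | ⟨-, hadj, -⟩
  exacts [G.loopless.irrefl _, hadj]

lemma mem_IA_mul_ofList_iff {c : CF G} {l : List V} (hl : ∀ a ∈ l, ∀ b ∈ l, ¬ G.Adj a b)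
    {y : V} : y ∈ IA (c * ofList G l) ↔ y ∈ l ∨ y ∈ IA c ∧ ∀ x ∈ l, x ≠ y ∧ ¬ G.Adj x y := by
  induction l using List.reverseRecOn with
  | nil => simp
  | append_singleton l x ih =>
    rw [ofList_append, ← mul_assoc, mem_IA_mul_singleton_iff,
      ih fun a ha b hb => hl a (by simp [ha]) b (by simp [hb])]
    have hxl : ∀ z ∈ l, ¬ G.Adj x z := fun z hz => hl x (by simp) z (by simp [hz])
    simp only [List.mem_append, List.mem_singleton]
    grind

lemma exists_eq_mul_ofList {z : CF G} {l : List V} (hl : l.Nodup) (hlz : ∀ x ∈ l, x ∈ IA z) :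
    ∃ a, z = a * ofList G l ∧ ∀ y ∈ IA a, y ∈ IA z ∨ ∃ x ∈ l, x = y ∨ G.Adj x y := by
  induction l using List.reverseRecOn generalizing z with
  | nil => exact ⟨z, by simp, fun y hy => Or.inl hy⟩
  | append_singleton l x ih =>
    have hxl : x ∉ l := fun h => (List.nodup_append.mp hl).2.2 x h x (by simp) rfl
    obtain ⟨c, rfl⟩ := mem_IA_iff.mp (hlz x (by simp))
    have hlc : ∀ y ∈ l, y ∈ IA c := fun y hy => by
      rcases mem_IA_mul_singleton_iff.mp (hlz y (by simp [hy])) with rfl | ⟨-, -, h⟩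
      exacts [absurd hy hxl, h]
    obtain ⟨a, rfl, ha⟩ := ih (List.nodup_append.mp hl).1 hlc
    refine ⟨a, by rw [ofList_append, mul_assoc], fun y hy => ?_⟩
    rcases ha y hy with hyc | ⟨x', hx', h⟩
    · by_cases hxy : x = y ∨ G.Adj x y
      · exact Or.inr ⟨x, by simp, hxy⟩
      · push Not at hxy
        exact Or.inl (mem_IA_mul_singleton_iff.mpr (Or.inr ⟨hxy.1.symm, hxy.2, hyc⟩))
    · exact Or.inr ⟨x', by simp [hx'], h⟩

lemma mul_ofList_singleton_ne_one (c : CF G) (x : V) : c * ofList G [x] ≠ 1 := by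
  intro h
  have := congrArg (fun z => x ∈ Multiplicative.toAdd (CFab G z)) h
  simp [show CFab G (ofList G [x]) = Multiplicative.ofAdd {x} from rfl] at this

lemma exists_mem_IA_of_ne_one {z : CF G} (hz : z ≠ 1) : ∃ x, x ∈ IA z := by
  obtain ⟨l, rfl⟩ := exists_ofList_eq z
  rcases List.eq_nil_or_concat' l with rfl | ⟨l, x, rfl⟩
  · exact absurd rfl hz
  · exact ⟨x, mem_IA_iff.mpr ⟨ofList G l, ofList_append l [x]⟩⟩

end CF

section NclF

variable {V : Type*} [Fintype V] [DecidableEq V] {G : SimpleGraph V}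

lemma mem_NclF {K : Finset V} {y : V} : y ∈ NclF G K ↔ y ∈ K ∨ ∃ x ∈ K, G.Adj x y := by
  simp [NclF]

lemma notMem_NclF {K : Finset V} {y : V} : y ∉ NclF G K ↔ ∀ x ∈ K, x ≠ y ∧ ¬ G.Adj x y := by
  simp only [mem_NclF, not_or, not_exists, not_and]
  exact ⟨fun h x hx => ⟨fun hxy => h.1 (hxy ▸ hx), h.2 x hx⟩,
    fun h => ⟨fun hy => (h y hy).1 rfl, fun x hx => (h x hx).2⟩⟩

lemma mem_NclF_singleton {c y : V} : y ∈ NclF G {c} ↔ y = c ∨ G.Adj c y := by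
  simp [mem_NclF]

lemma subset_NclF (K : Finset V) : K ⊆ NclF G K := Finset.subset_union_left

lemma NclF_mono {K L : Finset V} (h : K ⊆ L) : NclF G K ⊆ NclF G L := fun y hy => by
  rw [mem_NclF] at hy ⊢
  exact hy.imp (@h y) fun ⟨x, hx, hxy⟩ => ⟨x, h hx, hxy⟩

end NclF

lemma IsIndepSet.mono {V : Type*} {G : SimpleGraph V} {S S' : Set V} (h : IsIndepSet G S')
    (hS : S ⊆ S') : IsIndepSet G S :=
  fun x hx y hy => h x (hS hx) y (hS hy)

namespace CF

variable {V : Type*} [LinearOrder V] {G : SimpleGraph V}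

lemma prodOf_eq_ofList (K : Finset V) : prodOf G K = ofList G (K.sort (· ≤ ·)) := rfl

lemma ofList_eq_prodOf {l : List V} (hl : l.Nodup) (hind : IsIndepSet G ↑l.toFinset) :
    ofList G l = prodOf G l.toFinset :=
  ofList_perm (List.perm_of_nodup_nodup_toFinset_eq hl (Finset.sort_nodup _ _) (by simp))
    fun x hx y hy => hind x (by simpa using hx) y (by simpa using hy)

lemma prodOf_eq_sdiff_mul {K T : Finset V} (hK : IsIndepSet G ↑K) (hTK : T ⊆ K) :
    prodOf G K = prodOf G (K \ T) * prodOf G T := by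
  have hl : ((K \ T).sort (· ≤ ·) ++ T.sort (· ≤ ·)).toFinset = K := by
    simp [List.toFinset_append, Finset.sdiff_union_of_subset hTK]
  have hnd : ((K \ T).sort (· ≤ ·) ++ T.sort (· ≤ ·)).Nodup :=
    List.nodup_append.mpr ⟨Finset.sort_nodup _ _, Finset.sort_nodup _ _,
      fun x hx y hy hxy => by simp_all⟩
  rw [prodOf_eq_ofList (K \ T), prodOf_eq_ofList T, ← ofList_append,
    ofList_eq_prodOf hnd (by rwa [hl]), hl]

variable [Fintype V]

lemma IA_mul_prodOf (c : CF G) {K : Finset V} (hK : IsIndepSet G ↑K) :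
    IA (c * prodOf G K) = ↑K ∪ (IA c \ ↑(NclF G K)) := by
  ext y
  have hl : ∀ a ∈ K.sort (· ≤ ·), ∀ b ∈ K.sort (· ≤ ·), ¬ G.Adj a b :=
    fun a ha b hb => hK a (by simpa using ha) b (by simpa using hb)
  simp only [prodOf_eq_ofList, Set.mem_union, Set.mem_sdiff, Finset.mem_coe, notMem_NclF]
  simpa using mem_IA_mul_ofList_iff hl

lemma exists_eq_mul_prodOf {z : CF G} {K : Finset V} (hK : ↑K ⊆ IA z) :
    ∃ a, z = a * prodOf G K ∧ IA a ⊆ IA z ∪ ↑(NclF G K) := by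
  obtain ⟨a, ha, hIA⟩ := exists_eq_mul_ofList (G := G) (Finset.sort_nodup K (· ≤ ·))
    fun x hx => hK (by simpa using hx)
  refine ⟨a, ha, fun y hy => ?_⟩
  rcases hIA y hy with h | ⟨x, hx, h⟩
  · exact Or.inl h
  · rw [Finset.mem_sort] at hx
    exact Or.inr (mem_NclF.mpr (by rcases h with rfl | h; exacts [Or.inl hx, Or.inr ⟨x, hx, h⟩]))

end CF

section Side

variable {V : Type*} [Fintype V] [LinearOrder V] {G : SimpleGraph V}

/-- The admissible parts `K` of `H` at the end `c` of the path, `T` being the path vertices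
that have to lie in `K`. -/
def sideIdx (G : SimpleGraph V) (c : V) (T : Finset V) : Set (Finset V) :=
  {K | T ⊆ K ∧ IsIndepSet G ↑K ∧ K \ T ⊆ NclF G {c}}

/-- `Zone G p H` and `Ztwo G p H` are `sideZone` at the two ends of the path. -/
noncomputable def sideZone (G : SimpleGraph V) (c : V) (T K : Finset V) : Finset V :=
  NclF G (K \ T) ∪ (NclF G K ∩ NclF G {c})

lemma mem_sideZone {c y : V} {T K : Finset V} :
    y ∈ sideZone G c T K ↔ y ∈ NclF G (K \ T) ∨ y ∈ NclF G K ∧ y ∈ NclF G {c} := by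
  simp [sideZone]

end Side

namespace CF

variable {V : Type*} {G : SimpleGraph V}

open Classical in
/-- Right division, with junk value `1` when `t` is not a right factor of `z`. -/
noncomputable def rdiv (z t : CF G) : CF G :=
  if h : ∃ w, z = w * t then h.choose else 1

lemma rdiv_mul_cancel {z t : CF G} (h : ∃ w, z = w * t) : rdiv z t * t = z := by
  rw [rdiv, dif_pos h]
  exact h.choose_spec.symm

lemma rdiv_eq_of_eq_mul {z w t : CF G} (h : z = w * t) : rdiv z t = w :=
  mul_right_cancel (rdiv_mul_cancel ⟨w, h⟩ |>.trans h)

@[simp]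
lemma mul_rdiv_cancel (w t : CF G) : rdiv (w * t) t = w := rdiv_eq_of_eq_mul rfl

lemma rdiv_mul_cancel_of_IA_subset {x : CF G} {c : V} (hx : x ≠ 1) (hxc : IA x ⊆ {c}) :
    rdiv x (ofList G [c]) * ofList G [c] = x := by
  obtain ⟨y, hy⟩ := exists_mem_IA_of_ne_one hx
  obtain rfl : y = c := hxc hy
  exact rdiv_mul_cancel (mem_IA_iff.mp hy)

noncomputable def equivMulSingleton (c : V) :
    {x : CF G // x ≠ 1 ∧ IA x ⊆ {c}} ≃ {w : CF G // IA (w * ofList G [c]) ⊆ {c}} where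
  toFun x := ⟨rdiv x.1 (ofList G [c]), (rdiv_mul_cancel_of_IA_subset x.2.1 x.2.2).symm ▸ x.2.2⟩
  invFun w := ⟨w.1 * ofList G [c], mul_ofList_singleton_ne_one _ _, w.2⟩
  left_inv x := Subtype.ext (rdiv_mul_cancel_of_IA_subset x.2.1 x.2.2)
  right_inv _ := Subtype.ext (mul_rdiv_cancel _ _)

variable [Fintype V]

noncomputable def IAFinset (z : CF G) : Finset V := (Set.toFinite (IA z)).toFinset

@[simp]
lemma coe_IAFinset (z : CF G) : ↑(IAFinset z) = IA z := Set.Finite.coe_toFinset _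

lemma mem_IAFinset {z : CF G} {x : V} : x ∈ IAFinset z ↔ x ∈ IA z := Set.Finite.mem_toFinset _

lemma IA_subset_NclF_of_IA_mul_subset [DecidableEq V] {w : CF G} {c : V}
    (hw : IA (w * ofList G [c]) ⊆ {c}) : IA w ⊆ NclF G {c} := by
  intro y hy
  by_contra hyc
  obtain ⟨hcy, hadj⟩ := notMem_NclF.mp hyc c (Finset.mem_singleton_self c)
  exact hcy (hw (mem_IA_mul_singleton_iff.mpr (Or.inr ⟨Ne.symm hcy, hadj, hy⟩))).symm

variable [LinearOrder V]

section Forward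

variable {w : CF G} {c : V} {T : Finset V} (hT : IsIndepSet G ↑T)
  (hw : IA (w * ofList G [c]) ⊆ {c})
include hT hw

lemma IAFinset_mem_sideIdx : IAFinset (w * prodOf G T) ∈ sideIdx G c T := by
  have hIA := IA_mul_prodOf w hT
  refine ⟨fun x hx => ?_, by simpa using isIndepSet_IA (w * prodOf G T), fun x hx => ?_⟩
  · rw [mem_IAFinset, hIA]
    exact Or.inl hx
  · rw [Finset.mem_sdiff, mem_IAFinset, hIA] at hx
    exact IA_subset_NclF_of_IA_mul_subset hw (hx.1.resolve_left hx.2).1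

lemma exists_eq_mul_prodOf_IAFinset :
    ∃ a, w * prodOf G T = a * prodOf G (IAFinset (w * prodOf G T)) ∧
      IA a ⊆ ↑(sideZone G c T (IAFinset (w * prodOf G T))) := by
  set K := IAFinset (w * prodOf G T)
  obtain ⟨hTK, hK, -⟩ := IAFinset_mem_sideIdx hT hw
  have hIA : ↑K = ↑T ∪ (IA w \ ↑(NclF G T)) := by simp [K, IA_mul_prodOf w hT]
  have hKT : ↑(K \ T) ⊆ IA w \ ↑(NclF G T) := fun x hx => by
    rw [Finset.coe_sdiff, hIA] at hx
    exact hx.1.resolve_left hx.2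
  obtain ⟨a, hwa, ha⟩ := exists_eq_mul_prodOf (hKT.trans Set.sdiff_subset)
  refine ⟨a, by rw [hwa, mul_assoc, ← prodOf_eq_sdiff_mul hK hTK], fun y hy => ?_⟩
  rcases ha hy with hyw | hy
  · refine mem_sideZone.mpr (Or.inr ⟨?_, IA_subset_NclF_of_IA_mul_subset hw hyw⟩)
    by_contra hyK
    -- otherwise `y` commutes with all of `K ⊇ T`, so it is a last letter of `w * Π T`
    have : y ∈ (↑K : Set V) := by
      rw [hIA]
      exact Or.inr ⟨hyw, fun h => hyK (NclF_mono hTK h)⟩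
    exact hyK (subset_NclF K this)
  · exact mem_sideZone.mpr (Or.inl hy)

end Forward

section Backward

variable {a : CF G} {c : V} {T K : Finset V} (hK : K ∈ sideIdx G c T)
  (ha : IA a ⊆ ↑(sideZone G c T K))
include hK ha

lemma IA_mul_prodOf_of_mem_sideIdx : IA (a * prodOf G K) = ↑K := by
  rw [IA_mul_prodOf a hK.2.1, Set.union_eq_left]
  rintro y ⟨hya, hyK⟩
  rcases mem_sideZone.mp (ha hya) with h | h
  · exact absurd (NclF_mono Finset.sdiff_subset h) hyK
  · exact absurd h.1 hyK

lemma IA_mul_prodOf_sdiff_mul_subset : IA (a * prodOf G (K \ T) * ofList G [c]) ⊆ {c} := by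
  intro y hy
  by_contra hyc
  obtain ⟨-, hcy, hy⟩ := (mem_IA_mul_singleton_iff.mp hy).resolve_left hyc
  have hNc : y ∉ NclF G {c} := fun h => (mem_NclF_singleton.mp h).elim hyc hcy
  rw [IA_mul_prodOf a (hK.2.1.mono (by simp))] at hy
  rcases hy with hy | ⟨hya, hyT⟩
  · exact hNc (hK.2.2 hy)
  · rcases mem_sideZone.mp (ha hya) with h | h
    · exact hyT h
    · exact hNc h.2

end Backward

variable (G) in
noncomputable def sideEquiv (c : V) (T : Finset V) (hT : IsIndepSet G ↑T) :
    {w : CF G // IA (w * ofList G [c]) ⊆ {c}} ≃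
      Σ K : sideIdx G c T, {a : CF G // IA a ⊆ ↑(sideZone G c T K)} where
  toFun w := ⟨⟨_, IAFinset_mem_sideIdx hT w.2⟩,
    ⟨rdiv (w.1 * prodOf G T) (prodOf G (IAFinset (w.1 * prodOf G T))), by
      obtain ⟨a, ha, haZ⟩ := exists_eq_mul_prodOf_IAFinset hT w.2
      rwa [rdiv_eq_of_eq_mul ha]⟩⟩
  invFun y := ⟨rdiv (y.2.1 * prodOf G y.1.1) (prodOf G T), by
    rw [prodOf_eq_sdiff_mul y.1.2.2.1 y.1.2.1, ← mul_assoc, mul_rdiv_cancel]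
    exact IA_mul_prodOf_sdiff_mul_subset y.1.2 y.2.2⟩
  left_inv w := by
    obtain ⟨a, ha, -⟩ := exists_eq_mul_prodOf_IAFinset hT w.2
    ext
    simp only [rdiv_eq_of_eq_mul ha, ← ha, mul_rdiv_cancel]
  right_inv := by
    rintro ⟨⟨K, hK⟩, a, ha⟩
    have hz : rdiv (a * prodOf G K) (prodOf G T) * prodOf G T = a * prodOf G K := by
      rw [prodOf_eq_sdiff_mul hK.2.1 hK.1, ← mul_assoc, mul_rdiv_cancel]
    have hKz : IAFinset (a * prodOf G K) = K := by
      rw [← Finset.coe_inj, coe_IAFinset, IA_mul_prodOf_of_mem_sideIdx hK ha]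
    refine Sigma.subtype_ext (Subtype.ext ?_) ?_ <;>
      simp only [hz, hKz, mul_rdiv_cancel]

end CF

lemma List.mem_map_fst_filter_zipIdx {α : Type*} {l : List α} {P : ℕ → Prop} [DecidablePred P]
    {x : α} : x ∈ (l.zipIdx.filter (fun y => P y.2)).map Prod.fst ↔ ∃ i, l[i]? = some x ∧ P i := by
  simp [List.mem_zipIdx_iff_getElem?]

namespace SimpleGraph.Walk

variable {V : Type*} {G : SimpleGraph V} {u v : V} {p : G.Walk u v}

lemma support_getElem?_eq_some {i : ℕ} {x : V} :
    p.support[i]? = some x ↔ i ≤ p.length ∧ p.getVert i = x := by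
  constructor
  · intro h
    have hi : i ≤ p.length := by
      have := (List.getElem?_eq_some_iff.mp h).1; rw [length_support] at this; omega
    exact ⟨hi, Option.some_injective _ ((p.getVert_eq_support_getElem? hi).trans h)⟩
  · rintro ⟨hi, rfl⟩
    exact (p.getVert_eq_support_getElem? hi).symm

lemma reachable_of_mem_support [DecidableEq V] {K : SimpleGraph V} (p : G.Walk u v)
    (hp : ∀ e ∈ p.edges, e ∈ K.edgeSet) {x : V} (hx : x ∈ p.support) : K.Reachable u x :=
  ⟨(p.takeUntil x hx).transfer K fun e he => hp e (p.edges_takeUntil_subset_edges hx he)⟩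

end SimpleGraph.Walk

section Path

variable {V : Type*} {G : SimpleGraph V} {u v : V} {p : G.Walk u v}

lemma mem_evenVerts {x : V} : x ∈ evenVerts p ↔ ∃ i ≤ p.length, i % 2 = 1 ∧ p.getVert i = x := by
  rw [evenVerts, List.mem_map_fst_filter_zipIdx (P := (· % 2 = 1))]
  simp only [SimpleGraph.Walk.support_getElem?_eq_some]
  exact exists_congr fun i => by tauto

lemma mem_oddVerts {x : V} : x ∈ oddVerts p ↔ ∃ i ≤ p.length, i % 2 = 0 ∧ p.getVert i = x := by
  rw [oddVerts, List.mem_map_fst_filter_zipIdx (P := (· % 2 = 0))]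
  simp only [SimpleGraph.Walk.support_getElem?_eq_some]
  exact exists_congr fun i => by tauto

lemma evenVerts_sublist : (evenVerts p).Sublist p.support :=
  List.zipIdx_map_fst 0 p.support ▸ List.filter_sublist.map Prod.fst

lemma oddVerts_sublist : (oddVerts p).Sublist p.support :=
  List.zipIdx_map_fst 0 p.support ▸ List.filter_sublist.map Prod.fst

lemma mem_evenVerts_or_mem_oddVerts {x : V} (hx : x ∈ p.support) :
    x ∈ evenVerts p ∨ x ∈ oddVerts p := by
  obtain ⟨i, rfl, hi⟩ := SimpleGraph.Walk.mem_support_iff_exists_getVert.mp hx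
  rcases Nat.mod_two_eq_zero_or_one i with h | h
  exacts [Or.inr (mem_oddVerts.mpr ⟨i, hi, h, rfl⟩), Or.inl (mem_evenVerts.mpr ⟨i, hi, h, rfl⟩)]

lemma exists_adj_mem_support (hp : p.length ≠ 0) {x : V} (hx : x ∈ p.support) :
    ∃ y ∈ p.support, G.Adj x y := by
  obtain ⟨i, rfl, hi⟩ := SimpleGraph.Walk.mem_support_iff_exists_getVert.mp hx
  rcases Nat.lt_or_ge i p.length with h | h
  · exact ⟨_, p.getVert_mem_support (i + 1), p.adj_getVert_succ h⟩
  · obtain rfl : i = p.length := le_antisymm hi h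
    refine ⟨_, p.getVert_mem_support (p.length - 1), ?_⟩
    simpa [Nat.sub_add_cancel (Nat.one_le_iff_ne_zero.mpr hp)] using
      (p.adj_getVert_succ (i := p.length - 1) (by omega)).symm

lemma not_adj_getVert_of_add_two_le (hshort : p.length = G.dist u v) {i j : ℕ} (hij : i + 2 ≤ j)
    (hj : j ≤ p.length) : ¬ G.Adj (p.getVert i) (p.getVert j) := fun hadj => by
  have := SimpleGraph.dist_le ((p.take i).append (.cons hadj (p.drop j)))
  simp only [SimpleGraph.Walk.length_append, SimpleGraph.Walk.length_cons,
    SimpleGraph.Walk.take_length, SimpleGraph.Walk.drop_length] at this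
  omega

lemma not_adj_getVert_of_mod_two_eq (hshort : p.length = G.dist u v) {i j : ℕ}
    (hi : i ≤ p.length) (hj : j ≤ p.length) (hij : i % 2 = j % 2) :
    ¬ G.Adj (p.getVert i) (p.getVert j) := by
  rcases lt_trichotomy i j with h | rfl | h
  · exact not_adj_getVert_of_add_two_le hshort (by omega) hj
  · exact G.loopless.irrefl _
  · exact fun hadj => not_adj_getVert_of_add_two_le hshort (by omega) hi hadj.symm

lemma isIndepSet_evenVerts [DecidableEq V] (hshort : p.length = G.dist u v) :
    IsIndepSet G ↑(evenVerts p).toFinset := by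
  intro x hx y hy
  obtain ⟨i, hi, hi2, rfl⟩ := mem_evenVerts.mp (List.mem_toFinset.mp hx)
  obtain ⟨j, hj, hj2, rfl⟩ := mem_evenVerts.mp (List.mem_toFinset.mp hy)
  exact not_adj_getVert_of_mod_two_eq hshort hi hj (by omega)

lemma isIndepSet_oddVerts [DecidableEq V] (hshort : p.length = G.dist u v) :
    IsIndepSet G ↑(oddVerts p).toFinset := by
  intro x hx y hy
  obtain ⟨i, hi, hi2, rfl⟩ := mem_oddVerts.mp (List.mem_toFinset.mp hx)
  obtain ⟨j, hj, hj2, rfl⟩ := mem_oddVerts.mp (List.mem_toFinset.mp hy)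
  exact not_adj_getVert_of_mod_two_eq hshort hi hj (by omega)

end Path

section Bipartite

variable {V : Type*} [DecidableEq V] {G : SimpleGraph V} {H₁ H₂ : Finset V}

lemma bipGraph_adj_of_adj (h₁ : IsIndepSet G ↑H₁) (h₂ : IsIndepSet G ↑H₂) {a b : V}
    (ha : a ∈ H₁ ∪ H₂) (hb : b ∈ H₁ ∪ H₂) (hab : G.Adj a b) : (bipGraph G H₁ H₂).Adj a b := by
  refine ⟨hab, ?_⟩
  rw [Finset.mem_union] at ha hb
  rcases ha with ha | ha <;> rcases hb with hb | hb
  exacts [absurd hab (h₁ a ha b hb), Or.inl ⟨ha, hb⟩, Or.inr ⟨ha, hb⟩, absurd hab (h₂ a ha b hb)]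

lemma not_adj_of_mem_inter (h₁ : IsIndepSet G ↑H₁) (h₂ : IsIndepSet G ↑H₂) {x y : V}
    (hx : x ∈ H₁ ∩ H₂) (hy : y ∈ H₁ ∪ H₂) : ¬ G.Adj x y := by
  rw [Finset.mem_inter] at hx
  rcases Finset.mem_union.mp hy with hy | hy
  exacts [h₁ x hx.1 y hy, h₂ x hx.2 y hy]

end Bipartite

namespace BipPathIdx

variable {V : Type*} [Fintype V] [LinearOrder V] {G : SimpleGraph V} {u v : V} {p : G.Walk u v}
  {H₁ H₂ : Finset V} (hH₁ : H₁ ∈ sideIdx G u (evenVerts p).toFinset)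
  (hH₂ : H₂ ∈ sideIdx G v (oddVerts p).toFinset)
include hH₁ hH₂

lemma mem_union_of_mem_support {x : V} (hx : x ∈ p.support) : x ∈ H₁ ∪ H₂ := by
  rcases mem_evenVerts_or_mem_oddVerts hx with h | h
  · exact Finset.mem_union_left _ (hH₁.1 (List.mem_toFinset.mpr h))
  · exact Finset.mem_union_right _ (hH₂.1 (List.mem_toFinset.mpr h))

lemma mem_support_or_adj {x : V} (hx : x ∈ H₁ ∪ H₂) :
    x ∈ p.support ∨ G.Adj u x ∨ G.Adj v x := by
  rcases Finset.mem_union.mp hx with hx | hx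
  · by_cases hxE : x ∈ (evenVerts p).toFinset
    · exact Or.inl (evenVerts_sublist.subset (List.mem_toFinset.mp hxE))
    · rcases mem_NclF_singleton.mp (hH₁.2.2 (Finset.mem_sdiff.mpr ⟨hx, hxE⟩)) with rfl | h
      exacts [Or.inl p.start_mem_support, Or.inr (Or.inl h)]
  · by_cases hxO : x ∈ (oddVerts p).toFinset
    · exact Or.inl (oddVerts_sublist.subset (List.mem_toFinset.mp hxO))
    · rcases mem_NclF_singleton.mp (hH₂.2.2 (Finset.mem_sdiff.mpr ⟨hx, hxO⟩)) with rfl | h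
      exacts [Or.inl p.end_mem_support, Or.inr (Or.inr h)]

/-- A vertex in both parts would have no neighbour in `H₁ ∪ H₂`, but every vertex of `H` has
one: path vertices along the path, the others in `u` or `v`. -/
lemma disjoint (huv : u ≠ v) : Disjoint H₁ H₂ := by
  have hp : p.length ≠ 0 := fun h => huv (SimpleGraph.Walk.eq_of_length_eq_zero h)
  refine Finset.disjoint_left.mpr fun x hx₁ hx₂ => ?_
  have hmem : ∀ y ∈ p.support, y ∈ H₁ ∪ H₂ := fun y hy => mem_union_of_mem_support hH₁ hH₂ hy
  have hnadj : ∀ y ∈ H₁ ∪ H₂, ¬ G.Adj x y := fun y hy =>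
    not_adj_of_mem_inter hH₁.2.1 hH₂.2.1 (Finset.mem_inter.mpr ⟨hx₁, hx₂⟩) hy
  rcases mem_support_or_adj hH₁ hH₂ (Finset.mem_union_left _ hx₁) with h | h | h
  · obtain ⟨y, hy, hxy⟩ := exists_adj_mem_support hp h
    exact hnadj y (hmem y hy) hxy
  · exact hnadj u (hmem u p.start_mem_support) h.symm
  · exact hnadj v (hmem v p.end_mem_support) h.symm

lemma bipGraph_reachable {x : V} (hx : x ∈ H₁ ∪ H₂) :
    (bipGraph G H₁ H₂).Reachable u x := by
  have hmem : ∀ y ∈ p.support, y ∈ H₁ ∪ H₂ := fun y hy => mem_union_of_mem_support hH₁ hH₂ hy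
  have hadj : ∀ a ∈ H₁ ∪ H₂, ∀ b ∈ H₁ ∪ H₂, G.Adj a b → (bipGraph G H₁ H₂).Adj a b :=
    fun a ha b hb => bipGraph_adj_of_adj hH₁.2.1 hH₂.2.1 ha hb
  have hreach : ∀ y ∈ p.support, (bipGraph G H₁ H₂).Reachable u y := by
    refine fun y => p.reachable_of_mem_support fun e => Sym2.ind (fun a b he => ?_) e
    exact hadj a (hmem a (p.fst_mem_support_of_mem_edges he))
      b (hmem b (p.snd_mem_support_of_mem_edges he)) (p.adj_of_mem_edges he)
  rcases mem_support_or_adj hH₁ hH₂ hx with h | h | h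
  · exact hreach x h
  · exact (hadj u (hmem u p.start_mem_support) x hx h).reachable
  · exact (hreach v p.end_mem_support).trans (hadj v (hmem v p.end_mem_support) x hx h).reachable

end BipPathIdx

lemma mem_BipPathIdx_iff {V : Type*} [Fintype V] [LinearOrder V] {G : SimpleGraph V} {u v : V}
    {p : G.Walk u v} (huv : u ≠ v) {H : Finset V × Finset V} :
    H ∈ BipPathIdx G p ↔ H.1 ∈ sideIdx G u (evenVerts p).toFinset ∧
      H.2 ∈ sideIdx G v (oddVerts p).toFinset := by
  constructor
  · rintro ⟨hE, hO, ⟨-, h₁, h₂, -⟩, hN₁, hN₂⟩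
    exact ⟨⟨fun x hx => hE x (List.mem_toFinset.mp hx), h₁, hN₁⟩,
      ⟨fun x hx => hO x (List.mem_toFinset.mp hx), h₂, hN₂⟩⟩
  · rintro ⟨hH₁, hH₂⟩
    refine ⟨fun x hx => hH₁.1 (List.mem_toFinset.mpr hx),
      fun x hx => hH₂.1 (List.mem_toFinset.mpr hx),
      ⟨BipPathIdx.disjoint hH₁ hH₂ huv, hH₁.2.1, hH₂.2.1, fun a ha b hb => ?_⟩,
      hH₁.2.2, hH₂.2.2⟩
    exact (BipPathIdx.bipGraph_reachable hH₁ hH₂ ha).symm.trans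
      (BipPathIdx.bipGraph_reachable hH₁ hH₂ hb)

def prodSigmaEquiv {α β : Type*} {s : Set α} {t : Set β} {r : Set (α × β)}
    (hr : ∀ x, x ∈ r ↔ x.1 ∈ s ∧ x.2 ∈ t) (A : α → Type*) (B : β → Type*) :
    (Σ a : s, A a) × (Σ b : t, B b) ≃ Σ x : r, A x.1.1 × B x.1.2 where
  toFun y := ⟨⟨(y.1.1, y.2.1), (hr _).2 ⟨y.1.1.2, y.2.1.2⟩⟩, (y.1.2, y.2.2)⟩
  invFun z := (⟨⟨z.1.1.1, ((hr _).1 z.1.2).1⟩, z.2.1⟩, ⟨⟨z.1.1.2, ((hr _).1 z.1.2).2⟩, z.2.2⟩)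
  left_inv _ := rfl
  right_inv _ := rfl

namespace CF

variable {V : Type*} [Fintype V] [LinearOrder V]

variable (G : SimpleGraph V) in
noncomputable def pyramidEquiv (c : V) (T : Finset V) (hT : IsIndepSet G ↑T) :
    {x : CF G // x ≠ 1 ∧ IA x ⊆ {c}} ≃
      Σ K : sideIdx G c T, {a : CF G // IA a ⊆ ↑(sideZone G c T K)} :=
  (equivMulSingleton c).trans (sideEquiv G c T hT)

lemma pyramidEquiv_spec {G : SimpleGraph V} {c : V} {T : Finset V} (hT : IsIndepSet G ↑T)
    (x : {x : CF G // x ≠ 1 ∧ IA x ⊆ {c}}) {w : CF G} (hw : x.1 = w * ofList G [c]) :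
    ↑(pyramidEquiv G c T hT x).1.1 = IA (w * prodOf G T) ∧
      w * prodOf G T = (pyramidEquiv G c T hT x).2.1 * prodOf G (pyramidEquiv G c T hT x).1.1 := by
  obtain rfl : rdiv x.1 (ofList G [c]) = w := rdiv_eq_of_eq_mul hw
  refine ⟨coe_IAFinset _, (rdiv_mul_cancel ?_).symm⟩
  obtain ⟨a, ha, -⟩ := exists_eq_mul_prodOf_IAFinset hT (equivMulSingleton c x).2
  exact ⟨a, ha⟩

end CF

theorem stmt_19_general {V : Type*} [Fintype V] [LinearOrder V] (G : SimpleGraph V)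
    (u v : V) (huv : u ≠ v) (p : G.Walk u v)
    (hpath : p.IsPath) (hshort : p.length = G.dist u v) :
    ∃ Φ : ({w : CF G // w ≠ 1 ∧ IA w ⊆ {u}} × {w : CF G // w ≠ 1 ∧ IA w ⊆ {v}}) ≃
        (Σ H : {H : Finset V × Finset V // H ∈ BipPathIdx G p},
          {a : CF G // IA a ⊆ ↑(Zone G p H.1)} × {b : CF G // IA b ⊆ ↑(Ztwo G p H.1)}),
      ∀ (x : {w : CF G // w ≠ 1 ∧ IA w ⊆ {u}} × {w : CF G // w ≠ 1 ∧ IA w ⊆ {v}})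
        (w w' : CF G),
        x.1.1 = w * CFmk G (FreeMonoid.of u) →
        x.2.1 = w' * CFmk G (FreeMonoid.of v) →
        (↑(Φ x).1.1.1 : Set V) = IA (w * CFmk G (FreeMonoid.ofList (evenVerts p))) ∧
        (↑(Φ x).1.1.2 : Set V) = IA (w' * CFmk G (FreeMonoid.ofList (oddVerts p))) ∧
        w * CFmk G (FreeMonoid.ofList (evenVerts p)) =
          (Φ x).2.1.1 * prodOf G (Φ x).1.1.1 ∧
        w' * CFmk G (FreeMonoid.ofList (oddVerts p)) =
          (Φ x).2.2.1 * prodOf G (Φ x).1.1.2 := by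
  have hE := isIndepSet_evenVerts (p := p) hshort
  have hO := isIndepSet_oddVerts (p := p) hshort
  refine ⟨((CF.pyramidEquiv G u _ hE).prodCongr (CF.pyramidEquiv G v _ hO)).trans
    (prodSigmaEquiv (fun _ => mem_BipPathIdx_iff huv)
      (fun K => {a : CF G // IA a ⊆ ↑(sideZone G u (evenVerts p).toFinset K)})
      (fun K => {b : CF G // IA b ⊆ ↑(sideZone G v (oddVerts p).toFinset K)})),
    fun x w w' hw hw' => ?_⟩
  obtain ⟨hE₁, hE₂⟩ := CF.pyramidEquiv_spec hE x.1 hw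
  obtain ⟨hO₁, hO₂⟩ := CF.pyramidEquiv_spec hO x.2 hw'
  have hEl : CFmk G (FreeMonoid.ofList (evenVerts p)) = prodOf G (evenVerts p).toFinset :=
    CF.ofList_eq_prodOf (evenVerts_sublist.nodup hpath.support_nodup) hE
  have hOl : CFmk G (FreeMonoid.ofList (oddVerts p)) = prodOf G (oddVerts p).toFinset :=
    CF.ofList_eq_prodOf (oddVerts_sublist.nodup hpath.support_nodup) hO
  rw [hEl, hOl]
  exact ⟨hE₁, hO₁, hE₂, hO₂⟩

/-- Proposition 4.1: the map
`(wu, w'v) ↦ ((w·v₂·v₄⋯)/Π_{y∈H₁} y, (w'·v₁·v₃⋯)/Π_{y∈H₂} y)`, where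
`H₁ = IA(w·v₂·v₄⋯)` and `H₂ = IA(w'·v₁·v₃⋯)`, is a bijection from
`𝒫_u(G) × 𝒫_v(G)` onto the disjoint union, over all connected bipartite subgraphs
`H` of `G` containing the shortest path `p` and satisfying the conditions of
`BipPathIdx`, of the sets `𝒫^∅_{Z₁(H)}(G) × 𝒫^∅_{Z₂(H)}(G)`. -/
theorem stmt_19 {V : Type*} [Fintype V] [LinearOrder V] (G : SimpleGraph V)
    (hG : G.Connected) (u v : V) (huv : u ≠ v) (p : G.Walk u v)
    (hpath : p.IsPath) (hshort : p.length = G.dist u v) :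
    ∃ Φ : ({w : CF G // w ≠ 1 ∧ IA w ⊆ {u}} × {w : CF G // w ≠ 1 ∧ IA w ⊆ {v}}) ≃
        (Σ H : {H : Finset V × Finset V // H ∈ BipPathIdx G p},
          {a : CF G // IA a ⊆ ↑(Zone G p H.1)} × {b : CF G // IA b ⊆ ↑(Ztwo G p H.1)}),
      ∀ (x : {w : CF G // w ≠ 1 ∧ IA w ⊆ {u}} × {w : CF G // w ≠ 1 ∧ IA w ⊆ {v}})
        (w w' : CF G),
        x.1.1 = w * CFmk G (FreeMonoid.of u) →
        x.2.1 = w' * CFmk G (FreeMonoid.of v) →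
        (↑(Φ x).1.1.1 : Set V) = IA (w * CFmk G (FreeMonoid.ofList (evenVerts p))) ∧
        (↑(Φ x).1.1.2 : Set V) = IA (w' * CFmk G (FreeMonoid.ofList (oddVerts p))) ∧
        w * CFmk G (FreeMonoid.ofList (evenVerts p)) =
          (Φ x).2.1.1 * prodOf G (Φ x).1.1.1 ∧
        w' * CFmk G (FreeMonoid.ofList (oddVerts p)) =
          (Φ x).2.2.1 * prodOf G (Φ x).1.1.2 :=
  stmt_19_general G u v huv p hpath hshort
end
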